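/- arXiv:1910.03383 — 2 statements merged into one kernel-verified Lean document; each statement's English description precedes it below -/
import Mathlib

section
/- The planar system τ' = (1+τ)(ρ - 2αS + δ - α(1-τ)S + δ/S), S' = δ(1-S) - α(1-τ)S(1-S) admits the interior equilibrium S̄₂ = 2δ/(√(ρ²+8αδ) - ρ), τ̄₂ = (2α - (√(ρ²+8αδ) - ρ))/(2α), i.e., both right-hand sides vanish at (S̄₂, τ̄₂). -/
open Real

/-- The prevention system `τ' = (1+τ)(ρ - 2αS + δ - α(1-τ)S + δ/S)`,
`S' = δ(1-S) - α(1-τ)S(1-S)` admits the interior equilibrium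
`S̄₂ = 2δ/(√(ρ²+8αδ) - ρ)`, `τ̄₂ = (2α - (√(ρ²+8αδ) - ρ))/(2α)`:
both right-hand sides vanish there. -/
theorem stmt_7 (α δ ρ : ℝ) (hα : 0 < α) (hδ : 0 < δ) (hρ : 0 < ρ)
    (h1 : 2 * δ / (α + ρ) < 1) (h2 : (δ + ρ) / (2 * α) < 1) :
    let S2 : ℝ := 2 * δ / (sqrt (ρ ^ 2 + 8 * α * δ) - ρ)
    let τ2 : ℝ := (2 * α - (sqrt (ρ ^ 2 + 8 * α * δ) - ρ)) / (2 * α)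
    (1 + τ2) * (ρ - 2 * α * S2 + δ - α * (1 - τ2) * S2 + δ / S2) = 0 ∧
      δ * (1 - S2) - α * (1 - τ2) * S2 * (1 - S2) = 0 := by
  intro S2 τ2
  set r := sqrt (ρ ^ 2 + 8 * α * δ) with hrdef
  have hr2 : r ^ 2 = ρ ^ 2 + 8 * α * δ := sq_sqrt (by positivity)
  have hrρ : ρ < r := by
    nlinarith [sqrt_nonneg (ρ ^ 2 + 8 * α * δ)]
  have hd : r - ρ ≠ 0 := by linarith
  have hS2 : S2 = 2 * δ / (r - ρ) := rfl
  have hS2ne : S2 ≠ 0 := by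
    rw [hS2]; positivity
  constructor
  · have : ρ - 2 * α * S2 + δ - α * (1 - τ2) * S2 + δ / S2 = 0 := by
      rw [hS2]
      show ρ - 2 * α * (2 * δ / (r - ρ)) + δ -
        α * (1 - (2 * α - (r - ρ)) / (2 * α)) * (2 * δ / (r - ρ)) +
        δ / (2 * δ / (r - ρ)) = 0
      field_simp
      linear_combination hr2
    rw [this, mul_zero]
  · rw [hS2]
    show δ * (1 - 2 * δ / (r - ρ)) -
      α * (1 - (2 * α - (r - ρ)) / (2 * α)) * (2 * δ / (r - ρ)) *
      (1 - 2 * δ / (r - ρ)) = 0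
    field_simp
    ring
end

section
/- For α, δ, ρ > 0 satisfying 1 > max{2δ/(α+ρ), (δ+ρ)/(2α)}, the interior prevention equilibrium values satisfy S̄₂ = 2δ/(√(ρ²+8αδ) - ρ) ∈ (0,1) and τ̄₂ = (2α - √(ρ²+8αδ) + ρ)/(2α) ∈ (0,1). -/
open Real

theorem two_mul_add_lt_sqrt_iff {α δ ρ : ℝ} (hδ : 0 < δ) (hρ : 0 ≤ 2 * δ + ρ) :
    2 * δ + ρ < √(ρ ^ 2 + 8 * α * δ) ↔ δ + ρ < 2 * α := by
  rw [lt_sqrt hρ]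
  constructor <;> intro h <;> nlinarith

theorem sqrt_lt_two_mul_add_iff {α δ ρ : ℝ} (hα : 0 < α) (hρ : 0 < 2 * α + ρ) :
    √(ρ ^ 2 + 8 * α * δ) < 2 * α + ρ ↔ 2 * δ < α + ρ := by
  rw [sqrt_lt' hρ]
  constructor <;> intro h <;> nlinarith

/-- For `α, δ, ρ > 0` with `2δ/(α+ρ) < 1` and `(δ+ρ)/(2α) < 1`, the interior prevention
equilibrium values satisfy `S̄₂ = 2δ/(√(ρ²+8αδ) - ρ) ∈ (0,1)` and
`τ̄₂ = (2α - √(ρ²+8αδ) + ρ)/(2α) ∈ (0,1)`. -/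
theorem stmt_19 (α δ ρ : ℝ) (hα : 0 < α) (hδ : 0 < δ) (hρ : 0 < ρ)
    (h1 : 2 * δ / (α + ρ) < 1) (h2 : (δ + ρ) / (2 * α) < 1) :
    let S2 : ℝ := 2 * δ / (sqrt (ρ ^ 2 + 8 * α * δ) - ρ)
    let τ2 : ℝ := (2 * α - sqrt (ρ ^ 2 + 8 * α * δ) + ρ) / (2 * α)
    (0 < S2 ∧ S2 < 1) ∧ (0 < τ2 ∧ τ2 < 1) := by
  intro S2 τ2
  have hαρ : 2 * δ < α + ρ := (div_lt_one (by positivity)).mp h1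
  have hδρ : δ + ρ < 2 * α := (div_lt_one (by positivity)).mp h2
  have hS : 2 * δ + ρ < √(ρ ^ 2 + 8 * α * δ) :=
    (two_mul_add_lt_sqrt_iff hδ (by positivity)).mpr hδρ
  have hτ : √(ρ ^ 2 + 8 * α * δ) < 2 * α + ρ :=
    (sqrt_lt_two_mul_add_iff hα (by positivity)).mpr hαρ
  have hden : 0 < √(ρ ^ 2 + 8 * α * δ) - ρ := by linarith
  exact ⟨⟨div_pos (by positivity) hden, (div_lt_one hden).mpr (by linarith)⟩,
    ⟨div_pos (by linarith) (by positivity), (div_lt_one (by positivity)).mpr (by linarith)⟩⟩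
end
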